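/- Fix γ ≠ 0, V = ℂ^n, R ∈ End(V ⊗ V) constant, b : ℂ^n → GL(n,ℂ), and set A(λ) = b_1^{-1} b_2^{-1} R b_1 b_2, B(λ) = Σ_i e_{ii} ⊗ b(λ)^{-1}b(λ+γε_i), C(λ) = Σ_i (b(λ)^{-1}b(λ+γε_i)) ⊗ e_{ii}. Let D : ℂ^n → End(V⊗V) be arbitrary and suppose K_0 : ℂ^n → End(V) solves the semi-dynamical reflection equation with these A, B, C, D. Suppose q : ℂ^n → End(V) satisfies the shifted intertwining relation R q_1(λ) q_2(λ+h_1) = q_2(λ) q_1(λ+h_2) R and additionally the shift-trivialization q(λ+γε_i) = q(λ+γε_j) for all i, j, λ. Then K(λ) := b(λ)^{-1} q(λ) b(λ) K_0(λ) also solves the semi-dynamical reflection equation with the same A, B, C, D. -/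

import Mathlib

open Matrix Kronecker BigOperators

/-- `γ ε_i` : the shift vector adding `γ` to the `i`-th dynamical coordinate. -/
def eps (n : ℕ) (γ : ℂ) (i : Fin n) : Fin n → ℂ := fun j => if j = i then γ else 0

/-- `e_{ii}` diagonal matrix unit. -/
def E {n : ℕ} (i : Fin n) : Matrix (Fin n) (Fin n) ℂ := Matrix.single i i 1

/-- Space-1 dynamical shift `X₁(λ+h₂) = ∑ᵢ X(λ+γεᵢ) ⊗ e_{ii}`. -/
noncomputable def sh1 {n : ℕ} (γ : ℂ) (X : (Fin n → ℂ) → Matrix (Fin n) (Fin n) ℂ)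
    (l : Fin n → ℂ) : Matrix (Fin n × Fin n) (Fin n × Fin n) ℂ :=
  ∑ i : Fin n, X (l + eps n γ i) ⊗ₖ E i

/-- Space-2 dynamical shift `X₂(λ+h₁) = ∑ᵢ e_{ii} ⊗ X(λ+γεᵢ)`. -/
noncomputable def sh2 {n : ℕ} (γ : ℂ) (X : (Fin n → ℂ) → Matrix (Fin n) (Fin n) ℂ)
    (l : Fin n → ℂ) : Matrix (Fin n × Fin n) (Fin n × Fin n) ℂ :=
  ∑ i : Fin n, E i ⊗ₖ X (l + eps n γ i)

/-- The semi-dynamical reflection equation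
`A K₁ B K₂(λ+h₁) = K₂ C K₁(λ+h₂) D`. -/
noncomputable def SDRE {n : ℕ} (γ : ℂ)
    (A B C D : (Fin n → ℂ) → Matrix (Fin n × Fin n) (Fin n × Fin n) ℂ)
    (K : (Fin n → ℂ) → Matrix (Fin n) (Fin n) ℂ) : Prop :=
  ∀ l : Fin n → ℂ,
    A l * (K l ⊗ₖ (1 : Matrix (Fin n) (Fin n) ℂ)) * B l * sh2 γ K l
      = ((1 : Matrix (Fin n) (Fin n) ℂ) ⊗ₖ K l) * C l * sh1 γ K l * D l

/-! Since `q` takes a single value `P` at the shifted points `λ + γεᵢ`, its dynamical shifts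
are the constant tensors `1 ⊗ P` and `P ⊗ 1`, so the intertwining relation becomes the plain
exchange relation `R (q ⊗ P) = (P ⊗ q) R`. Conjugation by `b ⊗ b` turns it into
`A (q' ⊗ P') = (P' ⊗ q') A` with `q' = b⁻¹ q b` and `P' = b⁻¹ P b`, while `B` and `C` absorb
the shift of the dressed `K = q' K₀` as a left factor `1 ⊗ P'`, resp. `P' ⊗ 1`. Moving
`q' ⊗ P'` through `A` then reduces the reflection equation for `K` to the one for `K₀`. -/

section Kronecker

variable {R ι l m n p : Type*} [CommSemiring R]

theorem Matrix.sum_kronecker (s : Finset ι) (f : ι → Matrix l m R) (M : Matrix n p R) :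
    (∑ i ∈ s, f i) ⊗ₖ M = ∑ i ∈ s, f i ⊗ₖ M := by
  ext
  simp [kroneckerMap_apply, sum_apply, Finset.sum_mul]

theorem Matrix.kronecker_sum (s : Finset ι) (M : Matrix l m R) (f : ι → Matrix n p R) :
    M ⊗ₖ (∑ i ∈ s, f i) = ∑ i ∈ s, M ⊗ₖ f i := by
  ext
  simp [kroneckerMap_apply, sum_apply, Finset.mul_sum]

theorem Matrix.kronecker_mul_kronecker_mul_kronecker {l' m' n' o o' : Type*}
    [Fintype m] [Fintype n] [Fintype m'] [Fintype n']
    (A : Matrix l m R) (A' : Matrix l' m' R) (X : Matrix m n R) (X' : Matrix m' n' R)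
    (B : Matrix n o R) (B' : Matrix n' o' R) :
    A ⊗ₖ A' * X ⊗ₖ X' * B ⊗ₖ B' = (A * X * B) ⊗ₖ (A' * X' * B') := by
  rw [mul_kronecker_mul, mul_kronecker_mul]

end Kronecker

theorem conj_mul_conj {M : Type*} [Monoid M] {u v : M} (h : u * v = 1) (x y : M) :
    v * x * u * (v * y * u) = v * (x * y) * u := by
  simp only [mul_assoc, ← mul_assoc u v, h, one_mul]

theorem exists_forall_eq_of_forall_eq {ι α : Type*} [Nonempty α] {f : ι → α}
    (h : ∀ i j, f i = f j) : ∃ c, ∀ i, f i = c := by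
  rcases isEmpty_or_nonempty ι with hι | ⟨⟨i₀⟩⟩
  · exact ⟨Classical.arbitrary α, isEmptyElim⟩
  · exact ⟨f i₀, fun i => h i i₀⟩

section MatrixUnits

variable {n : ℕ}

theorem sum_E : ∑ i : Fin n, E i = 1 :=
  sum_single_one

theorem E_mul_E_self (i : Fin n) : E i * E i = E i := by
  simp [E, single_mul_single_same]

theorem E_mul_E_of_ne {i j : Fin n} (h : i ≠ j) : E i * E j = 0 :=
  single_mul_single_of_ne _ _ _ _ h _

theorem one_kronecker_eq_sum_E {m : Type*} (P : Matrix m m ℂ) :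
    (1 : Matrix (Fin n) (Fin n) ℂ) ⊗ₖ P = ∑ i, E i ⊗ₖ P := by
  rw [← sum_E, sum_kronecker]

theorem kronecker_one_eq_sum_E {m : Type*} (P : Matrix m m ℂ) :
    P ⊗ₖ (1 : Matrix (Fin n) (Fin n) ℂ) = ∑ i, P ⊗ₖ E i := by
  rw [← sum_E, kronecker_sum]

theorem sum_E_kronecker_mul_sum_E_kronecker {m : Type*} [Fintype m]
    (X Y : Fin n → Matrix m m ℂ) :
    (∑ i, E i ⊗ₖ X i) * (∑ j, E j ⊗ₖ Y j) = ∑ i, E i ⊗ₖ (X i * Y i) := by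
  rw [Finset.sum_mul_sum]
  refine Finset.sum_congr rfl fun i _ => ?_
  rw [Finset.sum_eq_single i (fun j _ hj => ?_) (by simp), ← mul_kronecker_mul, E_mul_E_self]
  rw [← mul_kronecker_mul, E_mul_E_of_ne hj.symm, zero_kronecker]

theorem sum_kronecker_E_mul_sum_kronecker_E {m : Type*} [Fintype m]
    (X Y : Fin n → Matrix m m ℂ) :
    (∑ i, X i ⊗ₖ E i) * (∑ j, Y j ⊗ₖ E j) = ∑ i, (X i * Y i) ⊗ₖ E i := by
  rw [Finset.sum_mul_sum]
  refine Finset.sum_congr rfl fun i _ => ?_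
  rw [Finset.sum_eq_single i (fun j _ hj => ?_) (by simp), ← mul_kronecker_mul, E_mul_E_self]
  rw [← mul_kronecker_mul, E_mul_E_of_ne hj.symm, kronecker_zero]

end MatrixUnits

section Reflection

variable {R m : Type*} [CommRing R] [Fintype m] [DecidableEq m]

theorem kronecker_intertwines_conj {T : Matrix (m × m) (m × m) R} {b Q P : Matrix m m R}
    (hb : IsUnit b) (h : T * (Q ⊗ₖ P) = (P ⊗ₖ Q) * T) :
    (b⁻¹ ⊗ₖ b⁻¹ * T * b ⊗ₖ b) * ((b⁻¹ * Q * b) ⊗ₖ (b⁻¹ * P * b))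
      = ((b⁻¹ * P * b) ⊗ₖ (b⁻¹ * Q * b)) * (b⁻¹ ⊗ₖ b⁻¹ * T * b ⊗ₖ b) := by
  have hu : b ⊗ₖ b * b⁻¹ ⊗ₖ b⁻¹ = 1 := by
    rw [← mul_kronecker_mul, mul_nonsing_inv _ ((isUnit_iff_isUnit_det b).mp hb),
      one_kronecker_one]
  rw [← kronecker_mul_kronecker_mul_kronecker _ _ Q P,
    ← kronecker_mul_kronecker_mul_kronecker _ _ P Q, conj_mul_conj hu, conj_mul_conj hu, h]

theorem reflection_eq_mul_left {A B C D S S₀ T T₀ : Matrix (m × m) (m × m) R}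
    {K₀ Q P : Matrix m m R}
    (hA : A * (Q ⊗ₖ P) = (P ⊗ₖ Q) * A)
    (hB : B * S = (1 ⊗ₖ P) * (B * S₀))
    (hC : C * T = (P ⊗ₖ 1) * (C * T₀))
    (h₀ : A * (K₀ ⊗ₖ 1) * B * S₀ = (1 ⊗ₖ K₀) * C * T₀ * D) :
    A * ((Q * K₀) ⊗ₖ 1) * B * S = (1 ⊗ₖ (Q * K₀)) * C * T * D := by
  have hQK₀P : (Q * K₀) ⊗ₖ 1 * (1 ⊗ₖ P) = Q ⊗ₖ P * (K₀ ⊗ₖ 1) := by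
    simp only [← mul_kronecker_mul, mul_one, one_mul]
  have hPQK₀ : P ⊗ₖ Q * (1 ⊗ₖ K₀) = 1 ⊗ₖ (Q * K₀) * (P ⊗ₖ 1) := by
    simp only [← mul_kronecker_mul, mul_one, one_mul]
  calc A * ((Q * K₀) ⊗ₖ 1) * B * S
      = A * ((Q * K₀) ⊗ₖ 1 * (1 ⊗ₖ P)) * (B * S₀) := by simp only [mul_assoc, hB]
    _ = A * (Q ⊗ₖ P) * ((K₀ ⊗ₖ 1) * B * S₀) := by rw [hQK₀P]; simp only [mul_assoc]
    _ = (P ⊗ₖ Q) * (A * (K₀ ⊗ₖ 1) * B * S₀) := by rw [hA]; simp only [mul_assoc]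
    _ = (P ⊗ₖ Q * (1 ⊗ₖ K₀)) * (C * T₀) * D := by rw [h₀]; simp only [mul_assoc]
    _ = (1 ⊗ₖ (Q * K₀)) * C * T * D := by
      rw [hPQK₀, mul_assoc _ (P ⊗ₖ 1), ← hC]; simp only [mul_assoc]

end Reflection

section Shifts

variable {n : ℕ} {γ : ℂ} {l : Fin n → ℂ} {P : Matrix (Fin n) (Fin n) ℂ}

theorem sh2_eq_one_kronecker {X : (Fin n → ℂ) → Matrix (Fin n) (Fin n) ℂ}
    (hX : ∀ i, X (l + eps n γ i) = P) : sh2 γ X l = 1 ⊗ₖ P := by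
  simp only [sh2, hX, one_kronecker_eq_sum_E]

theorem sh1_eq_kronecker_one {X : (Fin n → ℂ) → Matrix (Fin n) (Fin n) ℂ}
    (hX : ∀ i, X (l + eps n γ i) = P) : sh1 γ X l = P ⊗ₖ 1 := by
  simp only [sh1, hX, kronecker_one_eq_sum_E]

variable {b K₀ q : (Fin n → ℂ) → Matrix (Fin n) (Fin n) ℂ}

theorem sum_E_kronecker_mul_sh2_dressed (hb : ∀ m, IsUnit (b m))
    (hP : ∀ i, q (l + eps n γ i) = P) :
    (∑ i, E i ⊗ₖ ((b l)⁻¹ * b (l + eps n γ i)))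
        * sh2 γ (fun m => (b m)⁻¹ * q m * b m * K₀ m) l
      = (1 ⊗ₖ ((b l)⁻¹ * P * b l))
          * ((∑ i, E i ⊗ₖ ((b l)⁻¹ * b (l + eps n γ i))) * sh2 γ K₀ l) := by
  have hdet : ∀ m, IsUnit (b m).det := fun m => (isUnit_iff_isUnit_det _).mp (hb m)
  simp only [sh2, one_kronecker_eq_sum_E, sum_E_kronecker_mul_sum_E_kronecker, hP, mul_assoc,
    mul_nonsing_inv_cancel_left, hdet]

theorem sum_kronecker_E_mul_sh1_dressed (hb : ∀ m, IsUnit (b m))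
    (hP : ∀ i, q (l + eps n γ i) = P) :
    (∑ i, ((b l)⁻¹ * b (l + eps n γ i)) ⊗ₖ E i)
        * sh1 γ (fun m => (b m)⁻¹ * q m * b m * K₀ m) l
      = (((b l)⁻¹ * P * b l) ⊗ₖ 1)
          * ((∑ i, ((b l)⁻¹ * b (l + eps n γ i)) ⊗ₖ E i) * sh1 γ K₀ l) := by
  have hdet : ∀ m, IsUnit (b m).det := fun m => (isUnit_iff_isUnit_det _).mp (hb m)
  simp only [sh1, kronecker_one_eq_sum_E, sum_kronecker_E_mul_sum_kronecker_E, hP, mul_assoc,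
    mul_nonsing_inv_cancel_left, hdet]

end Shifts

theorem stmt13_general (n : ℕ) (γ : ℂ)
    (R : Matrix (Fin n × Fin n) (Fin n × Fin n) ℂ)
    (b : (Fin n → ℂ) → Matrix (Fin n) (Fin n) ℂ)
    (hb : ∀ l, IsUnit (b l))
    (D : (Fin n → ℂ) → Matrix (Fin n × Fin n) (Fin n × Fin n) ℂ)
    (A : (Fin n → ℂ) → Matrix (Fin n × Fin n) (Fin n × Fin n) ℂ)
    (hA : ∀ l, A l = ((b l)⁻¹ ⊗ₖ (b l)⁻¹) * R * (b l ⊗ₖ b l))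
    (B : (Fin n → ℂ) → Matrix (Fin n × Fin n) (Fin n × Fin n) ℂ)
    (hB : ∀ l, B l = ∑ i : Fin n, E i ⊗ₖ ((b l)⁻¹ * b (l + eps n γ i)))
    (C : (Fin n → ℂ) → Matrix (Fin n × Fin n) (Fin n × Fin n) ℂ)
    (hC : ∀ l, C l = ∑ i : Fin n, ((b l)⁻¹ * b (l + eps n γ i)) ⊗ₖ E i)
    (K₀ : (Fin n → ℂ) → Matrix (Fin n) (Fin n) ℂ)
    (hK₀ : SDRE γ A B C D K₀)
    (q : (Fin n → ℂ) → Matrix (Fin n) (Fin n) ℂ)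
    (hq : ∀ l, R * (q l ⊗ₖ (1 : Matrix (Fin n) (Fin n) ℂ)) * sh2 γ q l
        = ((1 : Matrix (Fin n) (Fin n) ℂ) ⊗ₖ q l) * sh1 γ q l * R)
    (htriv : ∀ (i j : Fin n) (l : Fin n → ℂ), q (l + eps n γ i) = q (l + eps n γ j)) :
    SDRE γ A B C D (fun l => (b l)⁻¹ * q l * b l * K₀ l) := by
  intro l
  obtain ⟨P, hP⟩ := exists_forall_eq_of_forall_eq (htriv · · l)
  have hRqP : R * (q l ⊗ₖ P) = (P ⊗ₖ q l) * R := by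
    have h := hq l
    rw [sh2_eq_one_kronecker hP, sh1_eq_kronecker_one hP, mul_assoc R, ← mul_kronecker_mul,
      ← mul_kronecker_mul] at h
    simpa only [mul_one, one_mul] using h
  refine reflection_eq_mul_left (P := (b l)⁻¹ * P * b l) ?_ ?_ ?_ (hK₀ l)
  · rw [hA l]
    exact kronecker_intertwines_conj (hb l) hRqP
  · rw [hB l]
    exact sum_E_kronecker_mul_sh2_dressed hb hP
  · rw [hC l]
    exact sum_kronecker_E_mul_sh1_dressed hb hP

/-- Proposition 3: if `K₀` solves the SDRE with `A, B, C` parametrized by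
`b, R` and `D` arbitrary, and `q` satisfies the shifted intertwining relation
`R q₁ q₂(λ+h₁) = q₂ q₁(λ+h₂) R` together with the shift-trivialization
`q(λ+γεᵢ) = q(λ+γεⱼ)`, then `K = b⁻¹ q b K₀` also solves the SDRE. -/
theorem stmt13 (n : ℕ) (γ : ℂ) (hγ : γ ≠ 0)
    (R : Matrix (Fin n × Fin n) (Fin n × Fin n) ℂ)
    (b : (Fin n → ℂ) → Matrix (Fin n) (Fin n) ℂ)
    (hb : ∀ l, IsUnit (b l))
    (D : (Fin n → ℂ) → Matrix (Fin n × Fin n) (Fin n × Fin n) ℂ)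
    (A : (Fin n → ℂ) → Matrix (Fin n × Fin n) (Fin n × Fin n) ℂ)
    (hA : ∀ l, A l = ((b l)⁻¹ ⊗ₖ (b l)⁻¹) * R * (b l ⊗ₖ b l))
    (B : (Fin n → ℂ) → Matrix (Fin n × Fin n) (Fin n × Fin n) ℂ)
    (hB : ∀ l, B l = ∑ i : Fin n, E i ⊗ₖ ((b l)⁻¹ * b (l + eps n γ i)))
    (C : (Fin n → ℂ) → Matrix (Fin n × Fin n) (Fin n × Fin n) ℂ)
    (hC : ∀ l, C l = ∑ i : Fin n, ((b l)⁻¹ * b (l + eps n γ i)) ⊗ₖ E i)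
    (K₀ : (Fin n → ℂ) → Matrix (Fin n) (Fin n) ℂ)
    (hK₀ : SDRE γ A B C D K₀)
    (q : (Fin n → ℂ) → Matrix (Fin n) (Fin n) ℂ)
    (hq : ∀ l, R * (q l ⊗ₖ (1 : Matrix (Fin n) (Fin n) ℂ)) * sh2 γ q l
        = ((1 : Matrix (Fin n) (Fin n) ℂ) ⊗ₖ q l) * sh1 γ q l * R)
    (htriv : ∀ (i j : Fin n) (l : Fin n → ℂ), q (l + eps n γ i) = q (l + eps n γ j)) :
    SDRE γ A B C D (fun l => (b l)⁻¹ * q l * b l * K₀ l) :=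
  stmt13_general n γ R b hb D A hA B hB C hC K₀ hK₀ q hq htriv
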